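/- arXiv:1103.0154 — 6 statements merged into one kernel-verified Lean document; each statement's English description precedes it below -/
import Mathlib

section
/- Let T = (A₁;…;A_p) be an l×n×p real tensor with columns A_i = (a_{i1},…,a_{in}), and define the l×p×n tensor T' = (B₁;…;B_n) where B_j = (a_{pj}, a_{p-1,j}, …, a_{1j}). Then T is absolutely full column rank if and only if T' is absolutely full column rank. In particular, an l×n×p AFR tensor exists if and only if an l×p×n AFR tensor exists. -/
open Matrix BigOperators

/-- An `l × n × p` real tensor (a `p`-tuple of `l × n` slices, with row index type `ι`
and column index type `κ`) is absolutely full column rank (AFR) if every nontrivial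
linear combination of the slices has full column rank. -/
def IsAFR {ι κ : Type*} [Fintype ι] [Fintype κ] {p : ℕ}
    (T : Fin p → Matrix ι κ ℝ) : Prop :=
  ∀ x : Fin p → ℝ, x ≠ 0 → (∑ k, x k • T k).rank = Fintype.card κ

/-!
A tensor is AFR exactly when the bilinear map `(x, y) ↦ (∑ k, x k • A k) *ᵥ y` vanishes only if
`x = 0` or `y = 0`. Exchanging the roles of `x` and `y` turns this map into the one of the tensor
sliced along its second mode, so that condition is symmetric; the reversal `k ↦ p - 1 - k` of the
slices is a mere reindexing of `x`.
-/

theorem Matrix.rank_eq_card_width_iff {m n K : Type*} [Fintype m] [Fintype n] [Field K]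
    (M : Matrix m n K) : M.rank = Fintype.card n ↔ ∀ v, M *ᵥ v = 0 → v = 0 := by
  rw [rank_eq_finrank_span_cols, eq_comm]
  exact linearIndependent_iff_card_eq_finrank_span.symm.trans
    (mulVec_injective_iff.symm.trans (injective_iff_map_eq_zero M.mulVecLin))

def flipSlices {ι m n R : Type*} (T : ι → Matrix m n R) : n → Matrix m ι R :=
  fun j => of fun r k => T k r j

theorem sum_smul_flipSlices_mulVec {ι m n R : Type*} [Fintype ι] [Fintype n] [CommSemiring R]
    (T : ι → Matrix m n R) (x : ι → R) (y : n → R) :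
    (∑ j, y j • flipSlices T j) *ᵥ x = (∑ k, x k • T k) *ᵥ y := by
  ext r
  simp only [mulVec, dotProduct, flipSlices, Matrix.sum_apply, Matrix.smul_apply, of_apply,
    smul_eq_mul, Finset.sum_mul]
  rw [Finset.sum_comm]
  exact Finset.sum_congr rfl fun k _ => Finset.sum_congr rfl fun j _ => by ring

section IsAFR

variable {m : Type*} [Fintype m] {n p : ℕ}

theorem isAFR_iff_mulVec_ne_zero {κ : Type*} [Fintype κ] (T : Fin p → Matrix m κ ℝ) :
    IsAFR T ↔ ∀ x : Fin p → ℝ, x ≠ 0 → ∀ y : κ → ℝ, y ≠ 0 → (∑ k, x k • T k) *ᵥ y ≠ 0 :=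
  forall₂_congr fun _ _ =>
    (rank_eq_card_width_iff _).trans <| forall_congr' fun _ => not_imp_not.symm

theorem isAFR_flipSlices_iff (T : Fin p → Matrix m (Fin n) ℝ) :
    IsAFR (flipSlices T) ↔ IsAFR T := by
  simp only [isAFR_iff_mulVec_ne_zero, sum_smul_flipSlices_mulVec]
  exact ⟨fun h x hx y hy => h y hy x hx, fun h y hy x hx => h x hx y hy⟩

theorem IsAFR.comp_equiv {κ : Type*} [Fintype κ] {T : Fin p → Matrix m κ ℝ} (hT : IsAFR T)
    (σ : Fin p ≃ Fin p) : IsAFR (T ∘ σ) := by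
  intro x hx
  have hx' : x ∘ σ.symm ≠ 0 := fun h => hx (funext fun k => by simpa using congrFun h (σ k))
  rw [← hT _ hx', ← σ.sum_comp fun k => (x ∘ σ.symm) k • T k]
  simp

theorem isAFR_comp_equiv_iff {κ : Type*} [Fintype κ] (T : Fin p → Matrix m κ ℝ)
    (σ : Fin p ≃ Fin p) : IsAFR (T ∘ σ) ↔ IsAFR T :=
  ⟨fun h => by simpa [Function.comp_assoc] using h.comp_equiv σ.symm, fun h => h.comp_equiv σ⟩

end IsAFR

theorem afr_rotate {l n p : ℕ} (T : Fin p → Matrix (Fin l) (Fin n) ℝ) :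
    (IsAFR T ↔
      IsAFR (fun j : Fin n => Matrix.of fun (r : Fin l) (i : Fin p) => T i.rev r j)) ∧
    ((∃ S : Fin p → Matrix (Fin l) (Fin n) ℝ, IsAFR S) ↔
      (∃ S' : Fin n → Matrix (Fin l) (Fin p) ℝ, IsAFR S')) := by
  have rotate : ∀ {n p : ℕ} (S : Fin p → Matrix (Fin l) (Fin n) ℝ),
      IsAFR S ↔ IsAFR (fun j : Fin n => Matrix.of fun (r : Fin l) (i : Fin p) => S i.rev r j) :=
    fun S => (isAFR_comp_equiv_iff S Fin.revPerm).symm.trans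
      (isAFR_flipSlices_iff (S ∘ Fin.revPerm)).symm
  exact ⟨rotate T, fun ⟨S, hS⟩ => ⟨_, (rotate S).mp hS⟩, fun ⟨S', hS'⟩ => ⟨_, (rotate S').mp hS'⟩⟩
end

section
/- For positive integers l, n, p, the set of absolutely full column rank tensors is an open subset of ℝ^{l×n×p} in the Euclidean topology. -/
open Matrix BigOperators

/-! The rank condition is homogeneous in `x`, so it suffices to test it on the unit sphere, where
it becomes the nonvanishing of the continuous function `det ((∑ xₖ Tₖ)ᵀ (∑ xₖ Tₖ))`. By the tube
lemma, nonvanishing of a continuous function on `{T} × sphere` persists on a neighbourhood of `T`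
because the sphere is compact. -/

namespace Matrix

variable {m n R : Type*} [Fintype n]

theorem rank_eq_card_width_iff_ker_eq_bot [Field R] (A : Matrix m n R) :
    A.rank = Fintype.card n ↔ LinearMap.ker A.mulVecLin = ⊥ := by
  have rank_nullity := LinearMap.finrank_range_add_finrank_ker A.mulVecLin
  rw [Module.finrank_fintype_fun_eq_card] at rank_nullity
  rw [← Submodule.finrank_eq_zero, rank]
  omega

theorem rank_eq_card_width_iff_det_transpose_mul_self_ne_zero [Fintype m] [Field R] [LinearOrder R]
    [IsStrictOrderedRing R] [DecidableEq n] (A : Matrix m n R) :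
    A.rank = Fintype.card n ↔ (Aᵀ * A).det ≠ 0 := by
  rw [rank_eq_card_width_iff_ker_eq_bot, ← ker_mulVecLin_transpose_mul_self, LinearMap.ker_eq_bot,
    coe_mulVecLin, mulVec_injective_iff_isUnit, isUnit_iff_isUnit_det, isUnit_iff_ne_zero]

end Matrix

theorem IsCompact.isOpen_setOf_forall_mem {X Y : Type*} [TopologicalSpace X] [TopologicalSpace Y]
    {K : Set Y} (hK : IsCompact K) {U : Set (X × Y)} (hU : IsOpen U) :
    IsOpen {x | ∀ y ∈ K, (x, y) ∈ U} :=
  isOpen_iff_mem_nhds.2 fun _ hx ↦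
    hK.eventually_forall_of_forall_eventually fun y hy ↦ hU.mem_nhds (hx y hy)

theorem isAFR_iff_forall_mem_sphere {ι κ : Type*} [Fintype ι] [Fintype κ] {p : ℕ}
    (T : Fin p → Matrix ι κ ℝ) :
    IsAFR T ↔ ∀ x ∈ Metric.sphere (0 : Fin p → ℝ) 1, (∑ k, x k • T k).rank = Fintype.card κ := by
  refine ⟨fun hT x hx ↦ hT x (ne_zero_of_mem_unit_sphere ⟨x, hx⟩), fun hT x hx ↦ ?_⟩
  have hnorm : ‖x‖⁻¹ ≠ 0 := inv_ne_zero (norm_ne_zero_iff.2 hx)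
  have hsphere : ‖x‖⁻¹ • x ∈ Metric.sphere (0 : Fin p → ℝ) 1 := by
    simp [norm_smul, hx]
  have hscale : ∑ k, (‖x‖⁻¹ • x) k • T k = ‖x‖⁻¹ • ∑ k, x k • T k := by
    simp only [Finset.smul_sum, Pi.smul_apply, smul_eq_mul, smul_smul]
  rw [← rank_smul_of_mem_nonZeroDivisors _ (mem_nonZeroDivisors_of_ne_zero hnorm), ← hscale]
  exact hT _ hsphere

theorem afr_isOpen_general (l n p : ℕ) :
    IsOpen {T : Fin p → Matrix (Fin l) (Fin n) ℝ | IsAFR T} := by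
  let combination : (Fin p → Matrix (Fin l) (Fin n) ℝ) × (Fin p → ℝ) → Matrix (Fin l) (Fin n) ℝ :=
    fun q ↦ ∑ k, q.2 k • q.1 k
  have hcont : Continuous fun q ↦ ((combination q)ᵀ * combination q).det := by
    have : Continuous combination := continuous_finsetSum _ fun k _ ↦ by fun_prop
    fun_prop
  have hset : {T : Fin p → Matrix (Fin l) (Fin n) ℝ | IsAFR T} =
      {T | ∀ x ∈ Metric.sphere 0 1, (T, x) ∈ {q | ((combination q)ᵀ * combination q).det ≠ 0}} := by
    ext T
    simp only [Set.mem_ofPred_eq, isAFR_iff_forall_mem_sphere,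
      rank_eq_card_width_iff_det_transpose_mul_self_ne_zero, combination]
  rw [hset]
  exact (isCompact_sphere 0 1).isOpen_setOf_forall_mem (isOpen_ne.preimage hcont)

theorem afr_isOpen (l n p : ℕ) (hl : 0 < l) (hn : 0 < n) (hp : 0 < p) :
    IsOpen {T : Fin p → Matrix (Fin l) (Fin n) ℝ | IsAFR T} :=
  afr_isOpen_general l n p
end

section
/- Let A = [[0,1],[-1,0]], P = [[0,1],[1,0]], Q = [[1,0],[0,-1]]. Then the seven matrices {E₂⊗A⊗E₂, E₂⊗P⊗A, Q⊗Q⊗A, P⊗Q⊗A, A⊗P⊗Q, A⊗P⊗P, A⊗Q⊗E₂} form a Hurwitz–Radon family of order 8. -/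
open Matrix Kronecker BigOperators

/-- A family of square real matrices is a Hurwitz–Radon family if each member is
orthogonal and skew-symmetric, and distinct members anticommute. -/
def IsHRFamily {ι σ : Type*} [Fintype ι] [DecidableEq ι] (A : σ → Matrix ι ι ℝ) : Prop :=
  (∀ i, A i * (A i)ᵀ = 1) ∧ (∀ i, A i = -(A i)ᵀ) ∧
    ∀ i j, i ≠ j → A i * A j = -(A j * A i)

noncomputable def Amat : Matrix (Fin 2) (Fin 2) ℝ := !![0, 1; -1, 0]
noncomputable def Pmat : Matrix (Fin 2) (Fin 2) ℝ := !![0, 1; 1, 0]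
noncomputable def Qmat : Matrix (Fin 2) (Fin 2) ℝ := !![1, 0; 0, -1]

/-!
Each member of the family is a Kronecker product of three matrices from `{1, A, P, Q}`.
These four are orthogonal, each is symmetric or skew-symmetric, and any two of them commute
or anticommute. All three properties pass to Kronecker products with the signs multiplied,
so the Hurwitz–Radon conditions reduce to a finite check on sign tables.
-/

section SignedKronecker

variable {R : Type*} [CommSemiring R] {m n : Type*}

theorem Matrix.kronecker_mul_transpose_eq_one {k l : Type*} [Fintype k] [Fintype l]
    [DecidableEq m] [DecidableEq n] {A : Matrix m k R} {B : Matrix n l R}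
    (hA : A * Aᵀ = 1) (hB : B * Bᵀ = 1) : (A ⊗ₖ B) * (A ⊗ₖ B)ᵀ = 1 := by
  rw [← kroneckerMap_transpose, ← mul_kronecker_mul, hA, hB, one_kronecker_one]

theorem Matrix.transpose_kronecker_eq_smul {A : Matrix m m R} {B : Matrix n n R} {a b : R}
    (hA : Aᵀ = a • A) (hB : Bᵀ = b • B) : (A ⊗ₖ B)ᵀ = (a * b) • (A ⊗ₖ B) := by
  rw [← kroneckerMap_transpose, hA, hB, smul_kronecker, kronecker_smul, smul_smul]

theorem Matrix.kronecker_mul_kronecker_eq_smul [Fintype m] [Fintype n]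
    {A A' : Matrix m m R} {B B' : Matrix n n R} {a b : R} (hA : A * A' = a • (A' * A)) (hB : B * B' = b • (B' * B)) :
    (A ⊗ₖ B) * (A' ⊗ₖ B') = (a * b) • ((A' ⊗ₖ B') * (A ⊗ₖ B)) := by
  rw [← mul_kronecker_mul, hA, hB, smul_kronecker, kronecker_smul, smul_smul,
    mul_kronecker_mul]

end SignedKronecker

inductive Letter
  | one
  | a
  | p
  | q

namespace Letter

noncomputable def mat : Letter → Matrix (Fin 2) (Fin 2) ℝ
  | one => 1
  | a => Amat
  | p => Pmat
  | q => Qmat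

def transposeSign : Letter → ℤ
  | a => -1
  | _ => 1

def commSign : Letter → Letter → ℤ
  | one, _ | _, one | a, a | p, p | q, q => 1
  | _, _ => -1

theorem mat_mul_transpose (x : Letter) : x.mat * x.matᵀ = 1 := by
  cases x <;> ext i j <;> fin_cases i <;> fin_cases j <;>
    simp [mat, Amat, Pmat, Qmat, mul_apply, Fin.sum_univ_two, one_apply]

theorem transpose_mat (x : Letter) : x.matᵀ = (x.transposeSign : ℝ) • x.mat := by
  cases x <;> ext i j <;> fin_cases i <;> fin_cases j <;>
    simp [mat, transposeSign, Amat, Pmat, Qmat, one_apply]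

theorem mat_mul_mat (x y : Letter) : x.mat * y.mat = (commSign x y : ℝ) • (y.mat * x.mat) := by
  cases x <;> cases y <;> ext i j <;> fin_cases i <;> fin_cases j <;>
    simp [mat, commSign, Amat, Pmat, Qmat, mul_apply, Fin.sum_univ_two, one_apply]

end Letter

abbrev Word := Letter × Letter × Letter

namespace Word

noncomputable def mat (w : Word) : Matrix ((Fin 2 × Fin 2) × Fin 2) ((Fin 2 × Fin 2) × Fin 2) ℝ :=
  (w.1.mat ⊗ₖ w.2.1.mat) ⊗ₖ w.2.2.mat

def transposeSign (w : Word) : ℤ :=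
  w.1.transposeSign * w.2.1.transposeSign * w.2.2.transposeSign

def commSign (v w : Word) : ℤ :=
  v.1.commSign w.1 * v.2.1.commSign w.2.1 * v.2.2.commSign w.2.2

theorem mat_mul_transpose (w : Word) : w.mat * w.matᵀ = 1 :=
  kronecker_mul_transpose_eq_one
    (kronecker_mul_transpose_eq_one w.1.mat_mul_transpose w.2.1.mat_mul_transpose)
    w.2.2.mat_mul_transpose

theorem transpose_mat (w : Word) : w.matᵀ = (w.transposeSign : ℝ) • w.mat := by
  rw [transposeSign, Int.cast_mul, Int.cast_mul]
  exact transpose_kronecker_eq_smul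
    (transpose_kronecker_eq_smul w.1.transpose_mat w.2.1.transpose_mat) w.2.2.transpose_mat

theorem mat_mul_mat (v w : Word) : v.mat * w.mat = (commSign v w : ℝ) • (w.mat * v.mat) := by
  rw [commSign, Int.cast_mul, Int.cast_mul]
  exact kronecker_mul_kronecker_eq_smul
    (kronecker_mul_kronecker_eq_smul (v.1.mat_mul_mat w.1) (v.2.1.mat_mul_mat w.2.1))
    (v.2.2.mat_mul_mat w.2.2)

theorem isHRFamily_mat {σ : Type*} (f : σ → Word) (hskew : ∀ i, (f i).transposeSign = -1)
    (hanti : ∀ i j, i ≠ j → (f i).commSign (f j) = -1) : IsHRFamily fun i ↦ (f i).mat := by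
  refine ⟨fun i ↦ (f i).mat_mul_transpose, fun i ↦ ?_, fun i j hij ↦ ?_⟩
  · rw [transpose_mat, hskew, Int.cast_neg, Int.cast_one, neg_one_smul, neg_neg]
  · rw [mat_mul_mat, hanti i j hij, Int.cast_neg, Int.cast_one, neg_one_smul]

end Word

theorem hr_family_order_eight :
    IsHRFamily
      (![((1 : Matrix (Fin 2) (Fin 2) ℝ) ⊗ₖ Amat) ⊗ₖ (1 : Matrix (Fin 2) (Fin 2) ℝ),
         ((1 : Matrix (Fin 2) (Fin 2) ℝ) ⊗ₖ Pmat) ⊗ₖ Amat,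
         (Qmat ⊗ₖ Qmat) ⊗ₖ Amat,
         (Pmat ⊗ₖ Qmat) ⊗ₖ Amat,
         (Amat ⊗ₖ Pmat) ⊗ₖ Qmat,
         (Amat ⊗ₖ Pmat) ⊗ₖ Pmat,
         (Amat ⊗ₖ Qmat) ⊗ₖ (1 : Matrix (Fin 2) (Fin 2) ℝ)] :
        Fin 7 → Matrix ((Fin 2 × Fin 2) × Fin 2) ((Fin 2 × Fin 2) × Fin 2) ℝ) := by
  open Letter in
  let words : Fin 7 → Word :=
    ![(one, a, one), (one, p, a), (q, q, a), (p, q, a), (a, p, q), (a, p, p), (a, q, one)]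
  have h := Word.isHRFamily_mat words (by decide) (by decide)
  convert h using 1
  ext i : 1
  fin_cases i <;> rfl
end

section
/- If {M₁,…,M_s} is a Hurwitz–Radon family of order n, then {A⊗E_n, Q⊗M₁, …, Q⊗M_s} is a Hurwitz–Radon family of order 2n, where A = [[0,1],[-1,0]] and Q = [[1,0],[0,-1]]. -/
/-!
Since `(A ⊗ B) * (C ⊗ D) = (A * C) ⊗ (B * D)` and `(A ⊗ B)ᵀ = Aᵀ ⊗ Bᵀ`, every Hurwitz–Radon
condition on the new family splits into a condition on the `2 × 2` factor and one on the
`n × n` factor. On the `2 × 2` side all that is needed is that `A` is orthogonal and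
skew-symmetric, `Q` is a symmetric involution, and `A` and `Q` anticommute.
-/

open Matrix Kronecker BigOperators

namespace Matrix

variable {l m n p α : Type*}

theorem neg_kronecker [Mul α] [HasDistribNeg α] (A : Matrix l m α) (B : Matrix n p α) :
    (-A) ⊗ₖ B = -(A ⊗ₖ B) := by
  ext; simp only [kroneckerMap_apply, neg_apply, neg_mul]

theorem kronecker_neg [Mul α] [HasDistribNeg α] (A : Matrix l m α) (B : Matrix n p α) :
    A ⊗ₖ (-B) = -(A ⊗ₖ B) := by
  ext; simp only [kroneckerMap_apply, neg_apply, mul_neg]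

theorem transpose_kronecker [Mul α] (A : Matrix l m α) (B : Matrix n p α) :
    (A ⊗ₖ B)ᵀ = Aᵀ ⊗ₖ Bᵀ :=
  (kroneckerMap_transpose _ A B).symm

theorem kronecker_mul_transpose_kronecker [Fintype m] [Fintype p] [CommSemiring α]
    (A : Matrix l m α) (B : Matrix n p α) :
    A ⊗ₖ B * (A ⊗ₖ B)ᵀ = (A * Aᵀ) ⊗ₖ (B * Bᵀ) := by
  rw [transpose_kronecker, mul_kronecker_mul]

end Matrix

namespace IsHRFamily

variable {ι κ σ : Type*} [Fintype ι] [DecidableEq ι] [Fintype κ] [DecidableEq κ]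

theorem fin_cons {s : ℕ} {B : Matrix ι ι ℝ} {N : Fin s → Matrix ι ι ℝ} (hN : IsHRFamily N)
    (hB : B * Bᵀ = 1) (hB_skew : B = -Bᵀ) (hBN : ∀ i, B * N i = -(N i * B)) :
    IsHRFamily (Fin.cons B N : Fin (s + 1) → Matrix ι ι ℝ) := by
  refine ⟨Fin.cases hB hN.1, Fin.cases hB_skew hN.2.1, Fin.cases ?_ fun i => Fin.cases ?_ ?_⟩
  · exact Fin.cases (absurd rfl) fun j _ => hBN j
  · intro _
    simp only [Fin.cons_zero, Fin.cons_succ, hBN, neg_neg]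
  · intro j hij
    exact hN.2.2 i j (ne_of_apply_ne Fin.succ hij)

theorem kronecker_left {M : σ → Matrix ι ι ℝ} (hM : IsHRFamily M) {Q : Matrix κ κ ℝ}
    (hQ : Q * Q = 1) (hQ_symm : Qᵀ = Q) :
    IsHRFamily fun i => Q ⊗ₖ M i := by
  refine ⟨fun i => ?_, fun i => ?_, fun i j hij => ?_⟩
  · rw [kronecker_mul_transpose_kronecker, hQ_symm, hQ, hM.1, one_kronecker_one]
  · rw [transpose_kronecker, hQ_symm, ← kronecker_neg, ← hM.2.1]
  · rw [← mul_kronecker_mul, ← mul_kronecker_mul, hM.2.2 i j hij, kronecker_neg]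

theorem fin_cons_kronecker {s : ℕ} {M : Fin s → Matrix ι ι ℝ} (hM : IsHRFamily M)
    {A Q : Matrix κ κ ℝ} (hA : A * Aᵀ = 1) (hA_skew : Aᵀ = -A)
    (hQ : Q * Q = 1) (hQ_symm : Qᵀ = Q) (hAQ : A * Q = -(Q * A)) :
    IsHRFamily (Fin.cons (A ⊗ₖ (1 : Matrix ι ι ℝ)) (fun i => Q ⊗ₖ M i) :
      Fin (s + 1) → Matrix (κ × ι) (κ × ι) ℝ) := by
  refine (hM.kronecker_left hQ hQ_symm).fin_cons ?_ ?_ fun i => ?_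
  · rw [kronecker_mul_transpose_kronecker, hA, transpose_one, mul_one, one_kronecker_one]
  · rw [transpose_kronecker, hA_skew, transpose_one, neg_kronecker, neg_neg]
  · rw [← mul_kronecker_mul, ← mul_kronecker_mul, hAQ, one_mul, mul_one, neg_kronecker]

end IsHRFamily

theorem hr_family_double {ι : Type*} [Fintype ι] [DecidableEq ι] {s : ℕ}
    (M : Fin s → Matrix ι ι ℝ) (hM : IsHRFamily M) :
    IsHRFamily
      (Fin.cons (!![0, 1; -1, 0] ⊗ₖ (1 : Matrix ι ι ℝ))
        (fun i => !![1, 0; 0, -1] ⊗ₖ M i) :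
        Fin (s + 1) → Matrix (Fin 2 × ι) (Fin 2 × ι) ℝ) := by
  have hA_skew : (!![0, 1; -1, 0] : Matrix (Fin 2) (Fin 2) ℝ)ᵀ = -!![0, 1; -1, 0] := by
    ext i j; fin_cases i <;> fin_cases j <;> simp
  have hQ_symm : (!![1, 0; 0, -1] : Matrix (Fin 2) (Fin 2) ℝ)ᵀ = !![1, 0; 0, -1] := by
    ext i j; fin_cases i <;> fin_cases j <;> simp
  refine hM.fin_cons_kronecker ?_ hA_skew ?_ hQ_symm ?_ <;> simp [hA_skew, one_fin_two]
end

section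
/- If T = (A₁;…;A_p) is an l×n×p absolutely full column rank real tensor, then for any positive integer u, the ul×un×p tensor (E_u⊗A₁;…;E_u⊗A_p) is absolutely full column rank, where E_u is the u×u identity and ⊗ is the Kronecker product. -/
open Matrix Kronecker BigOperators

namespace Matrix

variable {K R ι l m n p u : Type*}

theorem rank_eq_card_width_iff_injective [Field K] [Fintype m] [Fintype n] (A : Matrix m n K) :
    A.rank = Fintype.card n ↔ Function.Injective A.mulVec := by
  have rank_nullity := A.mulVecLin.finrank_range_add_finrank_ker
  rw [Module.finrank_fintype_fun_eq_card, ← rank] at rank_nullity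
  change _ ↔ Function.Injective A.mulVecLin
  rw [← LinearMap.ker_eq_bot, ← Submodule.finrank_eq_zero]
  omega

theorem kronecker_sum [CommSemiring R] (A : Matrix m n R) (s : Finset ι)
    (B : ι → Matrix l p R) : A ⊗ₖ ∑ i ∈ s, B i = ∑ i ∈ s, A ⊗ₖ B i :=
  map_sum (kroneckerBilinear (R := R) A) B s

theorem mulVec_one_kronecker_injective [Semiring R] [Fintype n] [Fintype u] [DecidableEq u]
    {A : Matrix m n R} (hA : Function.Injective A.mulVec) :
    Function.Injective ((1 : Matrix u u R) ⊗ₖ A).mulVec := by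
  intro v w hvw
  obtain ⟨X, rfl⟩ := vec_bijective.surjective v
  obtain ⟨Y, rfl⟩ := vec_bijective.surjective w
  rw [← vec_mul_eq_mulVec, ← vec_mul_eq_mulVec, vec_inj] at hvw
  rw [vec_inj, ← transpose_inj]
  funext j
  exact hA (congrArg (fun M => Mᵀ j) hvw)

end Matrix

theorem afr_kronecker_identity_general {l n p : ℕ} (T : Fin p → Matrix (Fin l) (Fin n) ℝ)
    (hT : IsAFR T) (u : ℕ) :
    IsAFR (fun i => (1 : Matrix (Fin u) (Fin u) ℝ) ⊗ₖ T i) := by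
  intro x hx
  have hM := (rank_eq_card_width_iff_injective _).mp (hT x hx)
  simp_rw [← kronecker_smul, ← kronecker_sum]
  exact (rank_eq_card_width_iff_injective _).mpr (mulVec_one_kronecker_injective hM)

theorem afr_kronecker_identity {l n p : ℕ} (T : Fin p → Matrix (Fin l) (Fin n) ℝ)
    (hT : IsAFR T) (u : ℕ) (hu : 0 < u) :
    IsAFR (fun i => (1 : Matrix (Fin u) (Fin u) ℝ) ⊗ₖ T i) :=
  afr_kronecker_identity_general T hT u
end

section
/- Let n ≡ 3 (mod 4), n ≥ 3. Then there exists an (n+1)×n×3 real tensor (C₁; C₂; C₃) that is absolutely full column rank and such that the last row of C₃ is zero. Concretely, with A = [[0,1],[-1,0]], P = [[0,1],[1,0]], E₂ the 2×2 identity, u = (n+1)/4, M₁ = A⊗E₂, M₂ = P⊗A, the tensor whose slices are the first n columns of E_u⊗M₁, E_u⊗M₂, and E_{4u} respectively has this property. -/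
/-!
Every combination `x₁M₁ + x₂M₂ + x₃E₄` of the 4×4 slices is `|x|` times an orthogonal matrix,
because `M₁ = A⊗E₂` and `M₂ = P⊗A` are skew-symmetric, orthogonal and anticommute. This survives
the Kronecker product with `E_u`, so every combination `B` of the full `(n+1)×(n+1)` slices has
`BᵀB = |x|²E`, and so has its truncation `B'` to the first `n` columns. Hence
`rank B' = rank (B'ᵀB') = n` for `x ≠ 0`. The third slice is a truncated identity, so its last
row vanishes.
-/

open Matrix Kronecker BigOperators

/-- Reindexing equivalence `Fin u × (Fin 2 × Fin 2) ≃ Fin (n + 1)` when `4 * u = n + 1`. -/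
def reIdx (n : ℕ) (hn : n % 4 = 3) :
    Fin ((n + 1) / 4) × (Fin 2 × Fin 2) ≃ Fin (n + 1) :=
  ((Equiv.prodCongr (Equiv.refl (Fin ((n + 1) / 4))) finProdFinEquiv).trans
    finProdFinEquiv).trans (finCongr (by omega))

namespace Matrix

variable {l m κ R : Type*} [Fintype m] [DecidableEq m]

theorem rank_eq_card_of_transpose_mul_self_eq_smul_one [Fintype l] [Field R] [LinearOrder R]
    [IsStrictOrderedRing R] {A : Matrix l m R} {c : R} (hc : c ≠ 0) (h : Aᵀ * A = c • 1) :
    A.rank = Fintype.card m := by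
  rw [← rank_transpose_mul_self, h,
    rank_smul_of_mem_nonZeroDivisors _ (mem_nonZeroDivisors_of_ne_zero hc), rank_one]

theorem transpose_mul_self_submatrix_eq_smul_one [Fintype l] [DecidableEq κ] [CommSemiring R]
    {A : Matrix m m R} {c : R} (h : Aᵀ * A = c • 1) (e : l ≃ m) {f : κ → m}
    (hf : Function.Injective f) : (A.submatrix e f)ᵀ * A.submatrix e f = c • 1 := by
  rw [transpose_submatrix, submatrix_mul_equiv, h]
  exact congrArg (c • ·) (submatrix_one (α := R) f hf)

end Matrix

def IsOrthogonalDesign {m : Type*} [Fintype m] [DecidableEq m] {p : ℕ}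
    (M : Fin p → Matrix m m ℝ) : Prop :=
  ∀ x : Fin p → ℝ, (∑ k, x k • M k)ᵀ * (∑ k, x k • M k) = (x ⬝ᵥ x) • 1

namespace IsOrthogonalDesign

variable {m : Type*} [Fintype m] [DecidableEq m] {p : ℕ} {M : Fin p → Matrix m m ℝ}

theorem isAFR_submatrix {l κ : Type*} [Fintype l] [Fintype κ] [DecidableEq κ]
    (hM : IsOrthogonalDesign M) (e : l ≃ m) {f : κ → m} (hf : Function.Injective f) :
    IsAFR fun k => (M k).submatrix e f := by
  intro x hx
  have hsum : ∑ k, x k • (M k).submatrix e f = (∑ k, x k • M k).submatrix e f := by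
    ext i j
    simp [Matrix.sum_apply]
  rw [hsum]
  exact rank_eq_card_of_transpose_mul_self_eq_smul_one (dotProduct_self_eq_zero.not.mpr hx)
    (transpose_mul_self_submatrix_eq_smul_one (hM x) e hf)

theorem one_kronecker {u : Type*} [Fintype u] [DecidableEq u] (hM : IsOrthogonalDesign M) :
    IsOrthogonalDesign fun k => (1 : Matrix u u ℝ) ⊗ₖ M k := by
  intro x
  have hsum : ∑ k, x k • ((1 : Matrix u u ℝ) ⊗ₖ M k) = 1 ⊗ₖ ∑ k, x k • M k := by
    ext i j
    simp [Matrix.sum_apply, kroneckerMap_apply, Finset.mul_sum, mul_left_comm]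
  rw [hsum, ← kroneckerMap_transpose, transpose_one, ← mul_kronecker_mul, one_mul, hM x,
    kronecker_smul, one_kronecker_one]

end IsOrthogonalDesign

theorem isOrthogonalDesign_quaternion :
    IsOrthogonalDesign ![!![0, 1; -1, 0] ⊗ₖ (1 : Matrix (Fin 2) (Fin 2) ℝ),
      !![0, 1; 1, 0] ⊗ₖ !![0, 1; -1, 0], 1] := by
  intro x
  ext ⟨i, i'⟩ ⟨j, j'⟩
  simp only [Fin.sum_univ_three, dotProduct]
  fin_cases i <;> fin_cases i' <;> fin_cases j <;> fin_cases j' <;>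
    simp [Matrix.mul_apply, Fintype.sum_prod_type, Fin.sum_univ_succ, Matrix.one_apply] <;> ring

theorem afr_exists_n_plus_one_general (n : ℕ) (hn : n % 4 = 3) :
    ∃ C : Fin 3 → Matrix (Fin (n + 1)) (Fin n) ℝ,
      (C = fun k =>
        ((![(1 : Matrix (Fin ((n + 1) / 4)) (Fin ((n + 1) / 4)) ℝ) ⊗ₖ
              (!![0, 1; -1, 0] ⊗ₖ (1 : Matrix (Fin 2) (Fin 2) ℝ)),
            (1 : Matrix (Fin ((n + 1) / 4)) (Fin ((n + 1) / 4)) ℝ) ⊗ₖ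
              (!![0, 1; 1, 0] ⊗ₖ !![0, 1; -1, 0]),
            (1 : Matrix (Fin ((n + 1) / 4) × (Fin 2 × Fin 2))
              (Fin ((n + 1) / 4) × (Fin 2 × Fin 2)) ℝ)] k).submatrix
          ⇑(reIdx n hn).symm
          (fun c : Fin n => (reIdx n hn).symm c.castSucc))) ∧
      IsAFR C ∧ (∀ j : Fin n, C 2 (Fin.last n) j = 0) := by
  refine ⟨_, rfl, ?_, fun j => ?_⟩
  · have hinj : Function.Injective fun c : Fin n => (reIdx n hn).symm c.castSucc :=
      (reIdx n hn).symm.injective.comp (Fin.castSucc_injective n)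
    convert (isOrthogonalDesign_quaternion.one_kronecker (u := Fin ((n + 1) / 4))).isAFR_submatrix
      (reIdx n hn).symm hinj using 3 with k
    fin_cases k <;> simp
  · exact one_apply_ne ((reIdx n hn).symm.injective.ne (Fin.castSucc_lt_last j).ne')

theorem afr_exists_n_plus_one (n : ℕ) (hn : n % 4 = 3) (hn3 : 3 ≤ n) :
    ∃ C : Fin 3 → Matrix (Fin (n + 1)) (Fin n) ℝ,
      (C = fun k =>
        ((![(1 : Matrix (Fin ((n + 1) / 4)) (Fin ((n + 1) / 4)) ℝ) ⊗ₖ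
              (!![0, 1; -1, 0] ⊗ₖ (1 : Matrix (Fin 2) (Fin 2) ℝ)),
            (1 : Matrix (Fin ((n + 1) / 4)) (Fin ((n + 1) / 4)) ℝ) ⊗ₖ
              (!![0, 1; 1, 0] ⊗ₖ !![0, 1; -1, 0]),
            (1 : Matrix (Fin ((n + 1) / 4) × (Fin 2 × Fin 2))
              (Fin ((n + 1) / 4) × (Fin 2 × Fin 2)) ℝ)] k).submatrix
          ⇑(reIdx n hn).symm
          (fun c : Fin n => (reIdx n hn).symm c.castSucc))) ∧
      IsAFR C ∧ (∀ j : Fin n, C 2 (Fin.last n) j = 0) :=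
  afr_exists_n_plus_one_general n hn
end
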